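/- arXiv:2502.19006 — 2 statements merged into one kernel-verified Lean document; each statement's English description precedes it below -/
import Mathlib

section
/- Cumulative posterior standard deviation under a Matérn-type information-gain bound, case d = ν: assume k(x, x) ≤ 1 for all x ∈ X, that the Matérn-type information-gain hypothesis holds, and that d = ν. Then for every T ∈ ℕ₊ and every sequence x₁, …, x_T ∈ X, ∑_{t=1}^T σ(x_t; X_{t−1}) ≤ T̄_Mat + C̃_Mat^{1/2} · (ln T)². -/
open Matrix

noncomputable section

/-- Gram matrix `K = [k(x_i, x_j)]` of the kernel `k` on the finite family `xs`. -/
def gram {X ι : Type*} [Fintype ι] (k : X → X → ℝ) (xs : ι → X) :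
    Matrix ι ι ℝ := fun i j => k (xs i) (xs j)

/-- Kernel vector `k_t(x) = (k(x₁, x), …, k(x_t, x))`. -/
def kvec {X ι : Type*} [Fintype ι] (k : X → X → ℝ) (xs : ι → X) (x : X) :
    ι → ℝ := fun i => k (xs i) x

/-- Regularized posterior variance `σ²_{λ²}(x; xs) = k(x,x) - k_t(x)ᵀ (K + λ² I)⁻¹ k_t(x)`.
For the empty family this is `k(x,x)`. -/
def postVar {X ι : Type*} [Fintype ι] [DecidableEq ι] (k : X → X → ℝ)
    (xs : ι → X) (lam : ℝ) (x : X) : ℝ :=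
  k x x - kvec k xs x ⬝ᵥ ((gram k xs + lam ^ 2 • (1 : Matrix ι ι ℝ))⁻¹ *ᵥ kvec k xs x)

/-- Noise-free posterior standard deviation `σ(x; xs) = inf_{λ > 0} σ_{λ²}(x; xs)`. -/
def postStd {X ι : Type*} [Fintype ι] [DecidableEq ι] (k : X → X → ℝ)
    (xs : ι → X) (x : X) : ℝ :=
  ⨅ lam : {l : ℝ // 0 < l}, Real.sqrt (postVar k xs lam.1 x)

/-- Maximum information gain `γ_T(λ²) = sup_{x₁,…,x_T} (1/2) ln det (I_T + λ⁻² K_T)`,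
a value in `[0, ∞]`. -/
def mig {X : Type*} (k : X → X → ℝ) (T : ℕ) (lam : ℝ) : ENNReal :=
  ⨆ xs : Fin T → X, ENNReal.ofReal
    ((1 / 2) * Real.log ((1 + (lam ^ 2)⁻¹ • gram k xs).det))

/-- The prefix `X_{t-1} = (x₁, …, x_{t-1})` of a finite sequence (`t` is 0-indexed). -/
def pre {X : Type*} {T : ℕ} (xs : Fin T → X) (t : Fin T) : Fin t.1 → X :=
  fun i => xs ⟨i.1, i.2.trans t.2⟩

/-- Noise-free posterior mean `μ(x; xs) = k_t(x)ᵀ K⁻¹ (f(x₁), …, f(x_t))ᵀ`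
(for the empty family this is `0`). -/
def postMean {X ι : Type*} [Fintype ι] [DecidableEq ι] (k : X → X → ℝ)
    (xs : ι → X) (f : X → ℝ) (x : X) : ℝ :=
  kvec k xs x ⬝ᵥ ((gram k xs)⁻¹ *ᵥ fun i => f (xs i))

/-- Noise-free posterior standard deviation in closed form,
`σ(x; xs) = (k(x,x) - k_t(x)ᵀ K⁻¹ k_t(x))^{1/2}` (for the empty family, `k(x,x)^{1/2}`). -/
def postStdInv {X ι : Type*} [Fintype ι] [DecidableEq ι] (k : X → X → ℝ)
    (xs : ι → X) (x : X) : ℝ :=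
  Real.sqrt (k x x - kvec k xs x ⬝ᵥ ((gram k xs)⁻¹ *ᵥ kvec k xs x))

/-- The first `t` points `X_t = (x₁, …, x_t)` of an infinite sequence. -/
def prefN {X : Type*} (xseq : ℕ → X) (t : ℕ) : Fin t → X := fun i => xseq i

/-!
Fix `ε > 0`. If `σ(x_t; X_{t-1}) > ε` at `i` indices, then along that subsequence each point has
`ε²`-regularised posterior variance above `ε²` given its predecessors in the subsequence (dropping
conditioning points only raises the posterior variance). The Schur-complement recursion
`det(K_{j+1} + ε² I) = det(K_j + ε² I) (ε² + σ²_{ε²})` then gives `det(I + ε⁻² K_i) ≥ 2^i`, i.e.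
`γ_i(ε²) ≥ (i/2) ln 2`. For `d = ν` and `ε_i = C̃^{1/2} ln i / i` the Matérn bound gives
`γ_i(ε_i²) ≤ i/6`, so fewer than `i` of the `σ`'s exceed `ε_i`: the `i`-th largest of them is at
most `ε_i` for `i ≥ T̄_Mat`, and at most `1` in any case. Summing the order statistics and using
`ln i / i ≤ ln² i - ln² (i - 1)` yields `∑ σ ≤ T̄_Mat + C̃^{1/2} ln² T`.
-/

namespace Matrix

variable {ι κ : Type*} [Fintype ι] [Fintype κ]

lemma dotProduct_extend_zero {φ : ι → κ} (hφ : Function.Injective φ) (w : ι → ℝ)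
    (b : κ → ℝ) : Function.extend φ w 0 ⬝ᵥ b = w ⬝ᵥ (b ∘ φ) := by
  classical
  rw [dotProduct, ← Finset.sum_subset (Finset.subset_univ (Finset.univ.image φ)),
    Finset.sum_image fun i _ j _ h => hφ h]
  · simp [dotProduct, hφ.extend_apply]
  · intro j _ hj
    rw [Function.extend_apply' _ _ _ (by simpa using hj), Pi.zero_apply, zero_mul]

lemma mulVec_extend_zero_comp {φ : ι → κ} (hφ : Function.Injective φ) (A : Matrix κ κ ℝ)
    (w : ι → ℝ) : (A *ᵥ Function.extend φ w 0) ∘ φ = A.submatrix φ φ *ᵥ w := by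
  ext i
  simp only [Function.comp_apply, mulVec, dotProduct_comm (A (φ i)), dotProduct_extend_zero hφ]
  exact dotProduct_comm _ _

variable [DecidableEq ι] {A : Matrix ι ι ℝ}

lemma PosDef.mulVec_inv_mulVec (hA : A.PosDef) (b : ι → ℝ) : A *ᵥ (A⁻¹ *ᵥ b) = b := by
  rw [mulVec_mulVec, mul_nonsing_inv A (A.isUnit_iff_isUnit_det.mp hA.isUnit), one_mulVec]

lemma PosDef.two_mul_dotProduct_sub_inv (hA : A.PosDef) (b : ι → ℝ) :
    2 * ((A⁻¹ *ᵥ b) ⬝ᵥ b) - (A⁻¹ *ᵥ b) ⬝ᵥ (A *ᵥ (A⁻¹ *ᵥ b)) = b ⬝ᵥ (A⁻¹ *ᵥ b) := by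
  rw [hA.mulVec_inv_mulVec, dotProduct_comm]
  ring

lemma PosDef.two_mul_dotProduct_sub_le (hA : A.PosDef) (w b : ι → ℝ) :
    2 * (w ⬝ᵥ b) - w ⬝ᵥ (A *ᵥ w) ≤ b ⬝ᵥ (A⁻¹ *ᵥ b) := by
  set w₀ := A⁻¹ *ᵥ b
  have hw₀ : A *ᵥ w₀ = b := hA.mulVec_inv_mulVec b
  have hT : Aᵀ = A := by simpa using hA.isHermitian.eq
  have hsymm : (w₀ - w) ⬝ᵥ (A *ᵥ w) = w ⬝ᵥ (A *ᵥ (w₀ - w)) := by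
    conv_lhs => rw [← hT]
    rw [dotProduct_mulVec, vecMul_transpose, dotProduct_comm]
  have hnonneg := hA.posSemidef.dotProduct_mulVec_nonneg (w₀ - w)
  rw [star_trivial] at hnonneg
  simp only [mulVec_sub, dotProduct_sub, sub_dotProduct, hw₀] at hsymm hnonneg ⊢
  linarith [dotProduct_comm w b, dotProduct_comm w₀ b]

lemma PosDef.dotProduct_inv_submatrix_le {κ : Type*} [Fintype κ] [DecidableEq κ]
    {A : Matrix κ κ ℝ} (hA : A.PosDef) {φ : ι → κ} (hφ : Function.Injective φ) (b : κ → ℝ) :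
    (b ∘ φ) ⬝ᵥ ((A.submatrix φ φ)⁻¹ *ᵥ (b ∘ φ)) ≤ b ⬝ᵥ (A⁻¹ *ᵥ b) := by
  -- `b ⬝ᵥ A⁻¹ b` is the maximum of `2 w ⬝ᵥ b - w ⬝ᵥ A w`, and the maximiser for the
  -- submatrix, extended by zero, is a competitor for `A`.
  set w := (A.submatrix φ φ)⁻¹ *ᵥ (b ∘ φ)
  calc (b ∘ φ) ⬝ᵥ w = 2 * (w ⬝ᵥ (b ∘ φ)) - w ⬝ᵥ (A.submatrix φ φ *ᵥ w) :=
        ((hA.submatrix hφ).two_mul_dotProduct_sub_inv _).symm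
    _ = 2 * (Function.extend φ w 0 ⬝ᵥ b)
          - Function.extend φ w 0 ⬝ᵥ (A *ᵥ Function.extend φ w 0) := by
        rw [dotProduct_extend_zero hφ, dotProduct_extend_zero hφ, mulVec_extend_zero_comp hφ]
    _ ≤ b ⬝ᵥ (A⁻¹ *ᵥ b) := hA.two_mul_dotProduct_sub_le _ _

lemma det_succ_eq_det_castSucc_mul {R : Type*} [CommRing R] {m : ℕ}
    (M : Matrix (Fin (m + 1)) (Fin (m + 1)) R)
    (hA : IsUnit (M.submatrix Fin.castSucc Fin.castSucc).det) :
    M.det = (M.submatrix Fin.castSucc Fin.castSucc).det *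
      (M (Fin.last m) (Fin.last m) - (fun j => M (Fin.last m) (Fin.castSucc j)) ⬝ᵥ
        ((M.submatrix Fin.castSucc Fin.castSucc)⁻¹ *ᵥ
          fun i => M (Fin.castSucc i) (Fin.last m))) := by
  let _ := (M.submatrix Fin.castSucc Fin.castSucc).invertibleOfIsUnitDet hA
  have hblocks : M.submatrix finSumFinEquiv finSumFinEquiv =
      fromBlocks (M.submatrix Fin.castSucc Fin.castSucc)
        (of fun i (_ : Fin 1) => M (Fin.castSucc i) (Fin.last m))
        (of fun (_ : Fin 1) j => M (Fin.last m) (Fin.castSucc j))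
        (of fun _ _ => M (Fin.last m) (Fin.last m)) := by
    ext (i | i) (j | j) <;> simp [Fin.fin_one_eq_zero] <;> rfl
  rw [← det_submatrix_equiv_self finSumFinEquiv, hblocks, det_fromBlocks₁₁, det_fin_one,
    invOf_eq_nonsing_inv]
  simp only [sub_apply, of_apply, mul_apply, dotProduct, mulVec, Finset.sum_mul, Finset.mul_sum,
    mul_assoc]
  rw [Finset.sum_comm]

end Matrix

def IsPosSemidefKernel {X : Type*} (k : X → X → ℝ) : Prop :=
  (∀ x y, k x y = k y x) ∧
    ∀ (n : ℕ) (xv : Fin n → X) (c : Fin n → ℝ), 0 ≤ ∑ i, ∑ j, c i * c j * k (xv i) (xv j)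

lemma gram_comp_add_smul_one {X ι κ : Type*} [Fintype ι] [Fintype κ] [DecidableEq ι]
    [DecidableEq κ] {k : X → X → ℝ} (v : κ → X) {φ : ι → κ} (hφ : Function.Injective φ)
    (c : ℝ) : gram k (v ∘ φ) + c • (1 : Matrix ι ι ℝ) =
      (gram k v + c • (1 : Matrix κ κ ℝ)).submatrix φ φ := by
  ext i j
  simp [_root_.gram, Matrix.one_apply, hφ.eq_iff]

namespace IsPosSemidefKernel

variable {X ι κ : Type*} [Fintype ι] [Fintype κ] {k : X → X → ℝ}

lemma gram_posSemidef (hk : IsPosSemidefKernel k) (u : ι → X) : (gram k u).PosSemidef := by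
  have hfin : ∀ n (v : Fin n → X), (gram k v).PosSemidef := fun n v =>
    Matrix.PosSemidef.of_dotProduct_mulVec_nonneg
      (Matrix.IsHermitian.ext fun i j => by simp [_root_.gram, hk.1 (v j)])
      fun c => by
        refine (hk.2 n v c).trans_eq ?_
        simp only [star_trivial, dotProduct, Matrix.mulVec, _root_.gram, Finset.mul_sum]
        exact Finset.sum_congr rfl fun i _ => Finset.sum_congr rfl fun j _ => by ring
  let e := Fintype.equivFin ι
  have : gram k u = (gram k (u ∘ e.symm)).submatrix e e := by ext; simp [_root_.gram]
  rw [this]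
  exact (hfin _ _).submatrix e

variable [DecidableEq ι] [DecidableEq κ]

lemma posDef_gram_add_smul_one (hk : IsPosSemidefKernel k) (u : ι → X) {lam : ℝ}
    (hlam : lam ≠ 0) : (gram k u + lam ^ 2 • (1 : Matrix ι ι ℝ)).PosDef :=
  Matrix.PosDef.posSemidef_add (hk.gram_posSemidef u) (Matrix.PosDef.one.smul (by positivity))

lemma postVar_le (hk : IsPosSemidefKernel k) (u : ι → X) {lam : ℝ} (hlam : lam ≠ 0) (x : X) :
    postVar k u lam x ≤ k x x := by
  have := (hk.posDef_gram_add_smul_one u hlam).inv.posSemidef.dotProduct_mulVec_nonneg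
    (kvec k u x)
  rw [star_trivial] at this
  unfold postVar
  linarith

lemma postVar_le_postVar_comp (hk : IsPosSemidefKernel k) (v : κ → X) {φ : ι → κ}
    (hφ : Function.Injective φ) {lam : ℝ} (hlam : lam ≠ 0) (x : X) :
    postVar k v lam x ≤ postVar k (v ∘ φ) lam x := by
  have := (hk.posDef_gram_add_smul_one v hlam).dotProduct_inv_submatrix_le hφ (kvec k v x)
  unfold postVar
  rw [gram_comp_add_smul_one v hφ]
  exact sub_le_sub_left this _

lemma det_gram_add_smul_one_succ (hk : IsPosSemidefKernel k) {m : ℕ} (v : Fin (m + 1) → X)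
    {lam : ℝ} (hlam : lam ≠ 0) :
    (gram k v + lam ^ 2 • (1 : Matrix (Fin (m + 1)) (Fin (m + 1)) ℝ)).det =
      (gram k (v ∘ Fin.castSucc) + lam ^ 2 • (1 : Matrix (Fin m) (Fin m) ℝ)).det *
        (lam ^ 2 + postVar k (v ∘ Fin.castSucc) lam (v (Fin.last m))) := by
  have hA := hk.posDef_gram_add_smul_one (v ∘ Fin.castSucc) hlam
  rw [gram_comp_add_smul_one v (Fin.castSucc_injective m)] at hA ⊢
  rw [Matrix.det_succ_eq_det_castSucc_mul _ (hA.isUnit.map Matrix.detMonoidHom)]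
  congr 1
  rw [postVar, gram_comp_add_smul_one v (Fin.castSucc_injective m)]
  simp only [_root_.gram, Matrix.add_apply, Matrix.smul_apply, Matrix.one_apply,
    (Fin.castSucc_lt_last _).ne, (Fin.castSucc_lt_last _).ne', if_true, if_false, smul_eq_mul,
    mul_zero, mul_one, add_zero, hk.1 (v (Fin.last m))]
  rw [add_sub_assoc', add_comm (lam ^ 2)]
  rfl

lemma pow_le_det_gram_add_smul_one (hk : IsPosSemidefKernel k) {m : ℕ} (v : Fin m → X)
    {lam : ℝ} (hlam : lam ≠ 0) (hvar : ∀ j, lam ^ 2 < postVar k (pre v j) lam (v j)) :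
    (2 * lam ^ 2) ^ m ≤ (gram k v + lam ^ 2 • (1 : Matrix (Fin m) (Fin m) ℝ)).det := by
  induction m with
  | zero => simp
  | succ m ih =>
    rw [hk.det_gram_add_smul_one_succ v hlam, pow_succ]
    have hprev := ih (v ∘ Fin.castSucc) fun j => hvar (Fin.castSucc j)
    have hlast : lam ^ 2 < postVar k (v ∘ Fin.castSucc) lam (v (Fin.last m)) := hvar (Fin.last m)
    gcongr
    · exact (pow_pos (by positivity) m).le.trans hprev
    · linarith

end IsPosSemidefKernel

section PostStd

variable {X ι : Type*} [Fintype ι] [DecidableEq ι] {k : X → X → ℝ}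

lemma postStd_le_sqrt_postVar (u : ι → X) (x : X) {lam : ℝ} (hlam : 0 < lam) :
    postStd k u x ≤ √(postVar k u lam x) :=
  ciInf_le ⟨0, by rintro _ ⟨l, rfl⟩; positivity⟩ (⟨lam, hlam⟩ : {l : ℝ // 0 < l})

lemma sq_lt_postVar_of_lt_postStd {u : ι → X} {x : X} {ε : ℝ} (hε : 0 < ε)
    (h : ε < postStd k u x) : ε ^ 2 < postVar k u ε x :=
  (Real.lt_sqrt hε.le).mp (h.trans_le (postStd_le_sqrt_postVar u x hε))

lemma IsPosSemidefKernel.postStd_le_sqrt (hk : IsPosSemidefKernel k) (u : ι → X) (x : X) :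
    postStd k u x ≤ √(k x x) :=
  (postStd_le_sqrt_postVar u x one_pos).trans
    (Real.sqrt_le_sqrt (hk.postVar_le u one_ne_zero x))

end PostStd

namespace IsPosSemidefKernel

variable {X : Type*} {k : X → X → ℝ}

lemma log_two_mul_le_mig (hk : IsPosSemidefKernel k) {m : ℕ} (v : Fin m → X) {lam : ℝ}
    (hlam : lam ≠ 0) (hvar : ∀ j, lam ^ 2 < postVar k (pre v j) lam (v j)) :
    ENNReal.ofReal (m * Real.log 2 / 2) ≤ mig k m lam := by
  have hdet : (1 + (lam ^ 2)⁻¹ • gram k v).det =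
      (lam ^ 2)⁻¹ ^ m * (gram k v + lam ^ 2 • (1 : Matrix (Fin m) (Fin m) ℝ)).det := by
    have : 1 + (lam ^ 2)⁻¹ • gram k v =
        (lam ^ 2)⁻¹ • (gram k v + lam ^ 2 • (1 : Matrix (Fin m) (Fin m) ℝ)) := by
      rw [smul_add, smul_smul, inv_mul_cancel₀ (by positivity), one_smul, add_comm]
    rw [this, Matrix.det_smul, Fintype.card_fin]
  have hpow : (2 : ℝ) ^ m ≤ (1 + (lam ^ 2)⁻¹ • gram k v).det := by
    calc (2 : ℝ) ^ m = (lam ^ 2)⁻¹ ^ m * (2 * lam ^ 2) ^ m := by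
          rw [← mul_pow]; field_simp
      _ ≤ _ := by
          rw [hdet]; gcongr; exact hk.pow_le_det_gram_add_smul_one v hlam hvar
  refine le_trans ?_ (le_iSup _ v)
  refine ENNReal.ofReal_le_ofReal ?_
  have := Real.log_le_log (by positivity) hpow
  rw [Real.log_pow] at this
  linarith

open Finset in
lemma card_lt_of_mig_lt (hk : IsPosSemidefKernel k) {T : ℕ} (xs : Fin T → X) {i : ℕ} {ε : ℝ}
    (hε : 0 < ε) (hmig : mig k i ε < ENNReal.ofReal (i * Real.log 2 / 2)) :
    #{t | ε < postStd k (pre xs t) (xs t)} < i := by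
  by_contra! hcard
  obtain ⟨S, hS, hScard⟩ := Finset.exists_subset_card_eq hcard
  let e := S.orderEmbOfFin hScard
  refine hmig.not_ge (hk.log_two_mul_le_mig (xs ∘ e) hε.ne' fun j => ?_)
  have hlt : ε < postStd k (pre xs (e j)) (xs (e j)) :=
    (Finset.mem_filter.mp (hS (S.orderEmbOfFin_mem hScard j))).2
  let φ : Fin j → Fin (e j) := fun l => ⟨e (Fin.castLT l (l.2.trans j.2)), e.strictMono l.2⟩
  have hφ : StrictMono φ := fun l l' h => e.strictMono h
  calc ε ^ 2 < postVar k (pre xs (e j)) ε (xs (e j)) := sq_lt_postVar_of_lt_postStd hε hlt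
    _ ≤ postVar k (pre xs (e j) ∘ φ) ε (xs (e j)) :=
        hk.postVar_le_postVar_comp _ hφ.injective hε.ne' _
    _ = postVar k (pre (xs ∘ e) j) ε ((xs ∘ e) j) := rfl

end IsPosSemidefKernel

-- `h` says that the `i`-th largest value of `σ` on `s`, counted from `0`, is at most `u i`.
open Finset in
lemma sum_le_sum_range_of_card_filter_lt_le {ι : Type*} [DecidableEq ι] (s : Finset ι)
    (σ : ι → ℝ) (u : ℕ → ℝ) (h : ∀ i < #s, #{t ∈ s | u i < σ t} ≤ i) :
    ∑ t ∈ s, σ t ≤ ∑ i ∈ range #s, u i := by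
  obtain ⟨n, hn⟩ : ∃ n, #s = n := ⟨_, rfl⟩
  rw [hn] at h ⊢
  induction n generalizing s with
  | zero => simp [card_eq_zero.mp hn]
  | succ n ih =>
    -- the smallest value is at most `u n`, since at most `n` of the `n + 1` values exceed it
    obtain ⟨t₀, ht₀, hmin⟩ := s.exists_min_image σ (card_pos.mp (by omega))
    have hlast : σ t₀ ≤ u n := by
      by_contra! hlt
      have hall : {t ∈ s | u n < σ t} = s :=
        filter_true_of_mem fun t ht => hlt.trans_le (hmin t ht)
      have := h n (by omega)
      rw [hall] at this
      omega
    rw [← add_sum_erase s σ ht₀, sum_range_succ, add_comm (σ t₀)]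
    refine add_le_add (ih (s.erase t₀) (fun i hi => ?_) (by rw [card_erase_of_mem ht₀, hn]; rfl))
      hlast
    exact (card_le_card (filter_subset_filter _ (erase_subset _ _))).trans (h i (by omega))

lemma log_succ_div_le_sq_log_sub (n : ℕ) :
    Real.log (n + 1) / (n + 1) ≤ Real.log (n + 1) ^ 2 - Real.log n ^ 2 := by
  rcases Nat.eq_zero_or_pos n with rfl | hn
  · simp
  have hn1 : (1 : ℝ) ≤ n := by exact_mod_cast hn
  have hlog_n : 0 ≤ Real.log n := Real.log_nonneg hn1
  have hgap : 1 / (n + 1) ≤ Real.log (n + 1) - Real.log n := by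
    have := Real.log_le_sub_one_of_pos (show (0 : ℝ) < n / (n + 1) by positivity)
    rw [Real.log_div (by positivity) (by positivity)] at this
    have h : (n : ℝ) / (n + 1) - 1 = -(1 / (n + 1)) := by field_simp; ring
    linarith
  calc Real.log (n + 1) / (n + 1) ≤ 1 / (n + 1) * (Real.log (n + 1) + Real.log n) := by
        rw [← one_div_mul_eq_div]; gcongr; linarith
    _ ≤ (Real.log (n + 1) - Real.log n) * (Real.log (n + 1) + Real.log n) := by
        gcongr; linarith [Real.log_le_log (by positivity) (by linarith : (n : ℝ) ≤ n + 1)]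
    _ = Real.log (n + 1) ^ 2 - Real.log n ^ 2 := by ring

lemma sum_range_ite_le_add_sq_log {c : ℝ} (hc : 0 ≤ c) (M T : ℕ) :
    ∑ i ∈ Finset.range T,
        (if i + 1 < M then 1 else c * Real.log (i + 1 : ℕ) / (i + 1 : ℕ)) ≤
      M + c * Real.log T ^ 2 := by
  have hstep : ∀ i : ℕ, (if i + 1 < M then 1 else c * Real.log (i + 1 : ℕ) / (i + 1 : ℕ)) ≤
      (if i < M then 1 else 0) + (c * Real.log (i + 1 : ℕ) ^ 2 - c * Real.log i ^ 2) := by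
    intro i
    have h := log_succ_div_le_sq_log_sub i
    have h0 : 0 ≤ Real.log (i + 1) / (i + 1) :=
      div_nonneg (Real.log_nonneg (by linarith [i.cast_nonneg (α := ℝ)])) (by positivity)
    push_cast
    rw [mul_div_assoc]
    split_ifs <;> nlinarith
  refine (Finset.sum_le_sum fun i _ => hstep i).trans ?_
  rw [Finset.sum_add_distrib, Finset.sum_range_sub (fun i => c * Real.log i ^ 2)]
  have hcard : ∑ i ∈ Finset.range T, (if i < M then (1 : ℝ) else 0) ≤ M := by
    rw [Finset.sum_boole, Nat.cast_le]
    refine (Finset.card_le_card fun i hi => ?_).trans (Finset.card_range M).le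
    simp only [Finset.mem_filter, Finset.mem_range] at hi ⊢
    exact hi.2
  simp only [Nat.cast_zero, Real.log_zero]
  linarith

open Finset in
lemma sum_le_add_mul_sq_log_of_card_lt {T M : ℕ} {σ : Fin T → ℝ} (hσ : ∀ t, σ t ≤ 1) {c : ℝ}
    (hc : 0 ≤ c) (hcount : ∀ i, M ≤ i → #{t | c * Real.log i / i < σ t} < i) :
    ∑ t, σ t ≤ M + c * Real.log T ^ 2 := by
  set u : ℕ → ℝ := fun i => if i + 1 < M then 1 else c * Real.log (i + 1 : ℕ) / (i + 1 : ℕ)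
  have hu : ∀ i, #{t | u i < σ t} ≤ i := by
    intro i
    by_cases hi : i + 1 < M
    · simp [u, hi, (hσ _).not_gt]
    · simpa [u, hi] using hcount (i + 1) (by omega)
  calc ∑ t, σ t ≤ ∑ i ∈ range T, u i := by
        simpa using sum_le_sum_range_of_card_filter_lt_le univ σ u fun i _ => hu i
    _ ≤ M + c * Real.log T ^ 2 := sum_range_ite_le_add_sq_log hc M T

lemma mul_rpow_one_third_mul_log_rpow_le {C x y : ℝ} (hC : 0 ≤ C) (hx : 0 < x) (hy : 0 ≤ y)
    (hxy : 0 ≤ Real.log x → x * Real.log x ^ 2 ≤ y ^ 3) :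
    C * x ^ (1 / 3 : ℝ) * Real.log x ^ (2 / 3 : ℝ) ≤ C * y := by
  rcases lt_or_ge (Real.log x) 0 with hneg | hnonneg
  · -- `Real.rpow` of a negative base carries the factor `cos (2π / 3) = -1 / 2`
    have hpow : Real.log x ^ (2 / 3 : ℝ) ≤ 0 := by
      rw [Real.rpow_def_of_neg hneg, show 2 / 3 * Real.pi = Real.pi - Real.pi / 3 by ring,
        Real.cos_pi_sub, Real.cos_pi_div_three]
      nlinarith [Real.exp_pos (Real.log (Real.log x) * (2 / 3))]
    have : 0 ≤ C * x ^ (1 / 3 : ℝ) := by positivity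
    nlinarith [mul_nonneg hC hy]
  · have hsplit :
        x ^ (1 / 3 : ℝ) * Real.log x ^ (2 / 3 : ℝ) = (x * Real.log x ^ 2) ^ (1 / 3 : ℝ) := by
      rw [Real.mul_rpow hx.le (by positivity), ← Real.rpow_natCast, ← Real.rpow_mul hnonneg]
      norm_num
    rw [mul_assoc, hsplit]
    gcongr
    calc (x * Real.log x ^ 2) ^ (1 / 3 : ℝ) ≤ (y ^ 3) ^ (1 / 3 : ℝ) :=
          Real.rpow_le_rpow (by positivity) (hxy hnonneg) (by norm_num)
      _ = y := by rw [← Real.rpow_natCast, ← Real.rpow_mul hy]; norm_num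

lemma one_le_log_natCast {i : ℕ} (hi : 3 ≤ i) : 1 ≤ Real.log i := by
  rw [Real.le_log_iff_exp_le (by positivity)]
  calc Real.exp 1 ≤ 3 := (Real.exp_one_lt_d9.trans (by norm_num)).le
    _ ≤ i := by exact_mod_cast hi

lemma matern_rate_le {C Ctil : ℝ} (hC : 0 < C) (hCtil1 : 1 ≤ Ctil)
    (hCtil : 9 * (6 * C) ^ 3 ≤ Ctil) {i : ℕ} (hi : 3 ≤ i) :
    C * ((i : ℝ) / (√Ctil * Real.log i / i) ^ 2) ^ (1 / 3 : ℝ) *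
        Real.log ((i : ℝ) / (√Ctil * Real.log i / i) ^ 2) ^ (2 / 3 : ℝ) ≤ i / 6 := by
  have hlog := one_le_log_natCast hi
  have hi0 : (0 : ℝ) < i := by positivity
  set x := (i : ℝ) / (√Ctil * Real.log i / i) ^ 2
  have hx : x = i ^ 3 / (Ctil * Real.log i ^ 2) := by
    simp only [x, div_pow, mul_pow, Real.sq_sqrt (by linarith : 0 ≤ Ctil)]
    field_simp
  have hx0 : 0 < x := by rw [hx]; positivity
  have hlogx : Real.log x ≤ 3 * Real.log i := by
    have : x ≤ i ^ 3 := hx ▸ div_le_self (by positivity) (by nlinarith)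
    simpa [Real.log_pow] using Real.log_le_log hx0 this
  calc _ ≤ C * (i / (6 * C)) := mul_rpow_one_third_mul_log_rpow_le hC.le hx0 (by positivity) ?_
    _ = i / 6 := by field_simp
  intro hlogx0
  calc x * Real.log x ^ 2 ≤ x * (3 * Real.log i) ^ 2 := by gcongr
    _ = 9 * i ^ 3 / Ctil := by rw [hx]; field_simp; norm_num
    _ ≤ (i / (6 * C)) ^ 3 := by
        rw [div_pow, div_le_div_iff₀ (by linarith) (by positivity)]
        nlinarith [pow_pos hi0 3]

open Finset in
lemma IsPosSemidefKernel.card_lt_of_matern_rate {X : Type*} {k : X → X → ℝ}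
    (hk : IsPosSemidefKernel k) {C Ctil lamBar : ℝ} {T0 : ℕ}
    (hgain : ∀ lam : ℝ, 0 < lam → lam ≤ lamBar → ∀ t : ℕ, T0 ≤ t →
      mig k t lam ≤ ENNReal.ofReal
        (C * ((t : ℝ) / lam ^ 2) ^ (1 / 3 : ℝ) * Real.log ((t : ℝ) / lam ^ 2) ^ (2 / 3 : ℝ)))
    (hC : 0 < C) (hCtil1 : 1 ≤ Ctil) (hCtil : 9 * (6 * C) ^ 3 ≤ Ctil) (hlamBar : 0 ≤ lamBar)
    {T : ℕ} (xs : Fin T → X) {i : ℕ} (hi : 3 ≤ i) (hiT0 : T0 ≤ i)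
    (hlam : Ctil * Real.log i ^ 2 / i ^ 2 ≤ lamBar ^ 2) :
    #{t | √Ctil * Real.log i / i < postStd k (pre xs t) (xs t)} < i := by
  have hlog := one_le_log_natCast hi
  have hε : 0 < √Ctil * Real.log i / i := by
    have := Real.sqrt_pos.mpr (show 0 < Ctil by linarith)
    positivity
  have hεlam : √Ctil * Real.log i / i ≤ lamBar := by
    refine (pow_le_pow_iff_left₀ hε.le hlamBar two_ne_zero).mp ?_
    rwa [div_pow, mul_pow, Real.sq_sqrt (by linarith)]
  refine hk.card_lt_of_mig_lt xs hε ?_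
  calc mig k i _ ≤ _ := hgain _ hε hεlam i hiT0
    _ ≤ ENNReal.ofReal (i / 6) := ENNReal.ofReal_le_ofReal (matern_rate_le hC hCtil1 hCtil hi)
    _ < ENNReal.ofReal (i * Real.log 2 / 2) := by
        have : (0 : ℝ) < i := by positivity
        rw [ENNReal.ofReal_lt_ofReal_iff (by positivity)]
        nlinarith [Real.log_two_gt_d9]

theorem sum_postStd_matern_d_eq_nu_general
{X : Type*} (k : X → X → ℝ)
    (hsym : ∀ x y : X, k x y = k y x)
    (hpsd : ∀ (n : ℕ) (xv : Fin n → X) (c : Fin n → ℝ),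
      0 ≤ ∑ i, ∑ j, c i * c j * k (xv i) (xv j))
    (hk1 : ∀ x : X, k x x ≤ 1)
    (CMat lamBar : ℝ) (hCMat : 0 < CMat) (hlamBar : 0 < lamBar)
    (T0 : ℕ) (d : ℕ) (ν : ℝ) (hν : 0 < ν)
    (hgain : ∀ lam : ℝ, 0 < lam → lam ≤ lamBar → ∀ t : ℕ, T0 ≤ t →
      mig k t lam ≤ ENNReal.ofReal
        (CMat * ((t : ℝ) / lam ^ 2) ^ ((d : ℝ) / (2 * ν + (d : ℝ))) *
          Real.log ((t : ℝ) / lam ^ 2) ^ (2 * ν / (2 * ν + (d : ℝ)))))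
    (Ctil : ℝ) (hCtil : Ctil = max 1
      ((2 + 2 * ν / (d : ℝ)) ^ (2 * ν / (d : ℝ)) * (6 * CMat) ^ (1 + 2 * ν / (d : ℝ))))
    (Tlam : ℕ) (hTlam : ∀ t : ℕ, Tlam ≤ t →
      Ctil * (t : ℝ) ^ (-(2 * ν / (d : ℝ))) * Real.log (t : ℝ) ^ (2 * ν / (d : ℝ)) ≤ lamBar ^ 2)
    (TMat : ℕ) (hTMat : TMat = max 4 (max T0 Tlam))
    (hdν : (d : ℝ) = ν) :
    ∀ T : ℕ, 0 < T → ∀ xs : Fin T → X,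
      ∑ t : Fin T, postStd k (pre xs t) (xs t) ≤
        (TMat : ℝ) + Real.sqrt Ctil * Real.log (T : ℝ) ^ 2 := by
  have hk : IsPosSemidefKernel k := ⟨hsym, hpsd⟩
  subst hdν
  have hd : (d : ℝ) ≠ 0 := hν.ne'
  have hratio : 2 * (d : ℝ) / d = 2 := by field_simp
  have hexp₁ : (d : ℝ) / (2 * d + d) = 1 / 3 := by field_simp; ring
  have hexp₂ : 2 * (d : ℝ) / (2 * d + d) = 2 / 3 := by field_simp; ring
  rw [hexp₁, hexp₂] at hgain
  rw [hratio] at hCtil hTlam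
  have hCtil' : Ctil = max 1 (16 * (6 * CMat) ^ 3) := by
    rw [hCtil, Real.rpow_two, show (1 : ℝ) + 2 = (3 : ℕ) by norm_num, Real.rpow_natCast]
    norm_num
  have hCtil1 : 1 ≤ Ctil := hCtil' ▸ le_max_left _ _
  have hCtil9 : 9 * (6 * CMat) ^ 3 ≤ Ctil :=
    hCtil' ▸ le_max_of_le_right (by nlinarith [pow_pos hCMat 3])
  intro T _ xs
  refine sum_le_add_mul_sq_log_of_card_lt
    (fun t => (hk.postStd_le_sqrt _ _).trans (Real.sqrt_le_one.mpr (hk1 _)))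
    (Real.sqrt_nonneg _) fun i hi => ?_
  have hlam := hTlam i (by omega)
  rw [Real.rpow_neg (by positivity), Real.rpow_two, Real.rpow_two] at hlam
  exact hk.card_lt_of_matern_rate hgain hCMat hCtil1 hCtil9 hlamBar.le xs (by omega) (by omega)
    (by simpa [div_eq_mul_inv, mul_right_comm] using hlam)

/-- Cumulative posterior standard deviation under a Matérn-type information-gain
bound, case d = ν. -/
theorem sum_postStd_matern_d_eq_nu
{X : Type*} [Nonempty X] (k : X → X → ℝ)
    (hsym : ∀ x y : X, k x y = k y x)
    (hpsd : ∀ (n : ℕ) (xv : Fin n → X) (c : Fin n → ℝ),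
      0 ≤ ∑ i, ∑ j, c i * c j * k (xv i) (xv j))
    (hk1 : ∀ x : X, k x x ≤ 1)
    (CMat lamBar : ℝ) (hCMat : 0 < CMat) (hlamBar : 0 < lamBar)
    (T0 : ℕ) (hT0 : 2 ≤ T0) (d : ℕ) (hd : 1 ≤ d) (ν : ℝ) (hν : 0 < ν)
    (hgain : ∀ lam : ℝ, 0 < lam → lam ≤ lamBar → ∀ t : ℕ, T0 ≤ t →
      mig k t lam ≤ ENNReal.ofReal
        (CMat * ((t : ℝ) / lam ^ 2) ^ ((d : ℝ) / (2 * ν + (d : ℝ))) *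
          Real.log ((t : ℝ) / lam ^ 2) ^ (2 * ν / (2 * ν + (d : ℝ)))))
    (Ctil : ℝ) (hCtil : Ctil = max 1
      ((2 + 2 * ν / (d : ℝ)) ^ (2 * ν / (d : ℝ)) * (6 * CMat) ^ (1 + 2 * ν / (d : ℝ))))
    (Tlam : ℕ) (hTlam : ∀ t : ℕ, Tlam ≤ t →
      Ctil * (t : ℝ) ^ (-(2 * ν / (d : ℝ))) * Real.log (t : ℝ) ^ (2 * ν / (d : ℝ)) ≤ lamBar ^ 2)
    (TMat : ℕ) (hTMat : TMat = max 4 (max T0 Tlam))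
    (hdν : (d : ℝ) = ν) :
    ∀ T : ℕ, 0 < T → ∀ xs : Fin T → X,
      ∑ t : Fin T, postStd k (pre xs t) (xs t) ≤
        (TMat : ℝ) + Real.sqrt Ctil * Real.log (T : ℝ) ^ 2 :=
  sum_postStd_matern_d_eq_nu_general k hsym hpsd hk1 CMat lamBar hCMat hlamBar T0 d ν hν hgain Ctil
    hCtil Tlam hTlam TMat hTMat hdν
end
end

section
/- Cumulative regret for GP-UCB under a Matérn-type information-gain bound, case d > ν: assume k(x, x) ≤ 1 for all x ∈ X, that the Matérn-type information-gain hypothesis holds, and that d > ν. Let f belong to the pre-RKHS of k with ‖f‖_k ≤ B for some B > 0, let x* ∈ X satisfy f(x*) = sup_{x ∈ X} f(x), and suppose the sequence (x_t)_{t≥1} follows the GP-UCB rule with parameter B. Then for every T ∈ ℕ₊, the cumulative regret satisfies ∑_{t=1}^T (f(x*) − f(x_t)) ≤ 2B (T̄_Mat + C̃_Mat^{1/2} (d/(d−ν)) T^{(d−ν)/d} (ln T)^{ν/d}). -/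
open Matrix

noncomputable section

/-!
Write `σₜ = σ(xₜ; Xₜ₋₁)`. Cauchy–Schwarz in the RKHS gives `|f - μ| ≤ B σ` and `|f| ≤ B`, so the
GP-UCB rule bounds the instantaneous regret by `2B min(1, σₜ)`. If `m` of the `σₜ` were at least
`λ_m`, then, since posterior variances only grow when conditioning on fewer points, those `m`
points would have regularised posterior variances `≥ λ_m²` with respect to their predecessors. By
the Schur-complement formula their Gram matrix would then satisfy
`det (I + 2λ_m⁻² K) ≥ 3^m`, i.e. `γ_m(λ_m²/2) ≥ (m/2) ln 3`, contradicting the Matérn bound for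
`m > T̄_Mat`. Hence the `m`-th largest `min(1, σₜ)` is at most `λ_m`, and summing
`λ_m = C̃^{1/2} m^{-ν/d} (ln m)^{ν/d}` gives the bound.
-/

open Finset

section Kernel

variable {X : Type*} {k : X → X → ℝ}

theorem posSemidef_of_forall_fin_sum_nonneg (hsym : ∀ x y : X, k x y = k y x)
    (hpsd : ∀ (n : ℕ) (xv : Fin n → X) (c : Fin n → ℝ),
      0 ≤ ∑ i, ∑ j, c i * c j * k (xv i) (xv j)) :
    (Matrix.of k).PosSemidef := by
  refine ⟨funext₂ fun x y => hsym y x, fun a => ?_⟩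
  set e := a.support.equivFin
  have h (g : X → ℝ) : ∑ x ∈ a.support, g x = ∑ i, g (e.symm i) := by
    rw [Equiv.sum_comp e.symm (fun x : a.support => g x), Finset.sum_coe_sort]
  refine (hpsd _ (fun i => (e.symm i : X)) (fun i => a (e.symm i))).trans_eq ?_
  simp only [Finsupp.sum, h, Matrix.of_apply, star_trivial]
  exact sum_congr rfl fun i _ => sum_congr rfl fun j _ => by ring

theorem Matrix.PosSemidef.dotProduct_mulVec_sq_le {ι : Type*} [Fintype ι]
    {M : Matrix ι ι ℝ} (hM : M.PosSemidef) (a b : ι → ℝ) :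
    (a ⬝ᵥ (M *ᵥ b)) ^ 2 ≤ (a ⬝ᵥ (M *ᵥ a)) * (b ⬝ᵥ (M *ᵥ b)) := by
  classical
  have hS : M.IsSymm := by simpa using hM.isHermitian
  simpa only [Matrix.toBilin'_apply'] using
    (Matrix.toBilin' M).apply_sq_le_of_symm
      (fun x => by simpa [Matrix.toBilin'_apply'] using hM.dotProduct_mulVec_nonneg x)
      (LinearMap.BilinForm.isSymm_iff.mp (Matrix.isSymm_toBilin'_iff_isSymm.mpr hS)) a b

theorem Matrix.PosSemidef.dotProduct_submatrix_mulVec_sq_le {ι κ : Type*} [Fintype ι]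
    [Fintype κ] {K : Matrix X X ℝ} (hK : K.PosSemidef) (xs : ι → X) (ys : κ → X)
    (a : ι → ℝ) (b : κ → ℝ) :
    (a ⬝ᵥ (K.submatrix xs ys *ᵥ b)) ^ 2 ≤
      (a ⬝ᵥ (K.submatrix xs xs *ᵥ a)) * (b ⬝ᵥ (K.submatrix ys ys *ᵥ b)) := by
  simpa [dotProduct, Matrix.mulVec, Fintype.sum_sum_type] using
    (hK.submatrix (Sum.elim xs ys)).dotProduct_mulVec_sq_le (Sum.elim a 0) (Sum.elim 0 b)

variable {ι : Type*} [Fintype ι]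

theorem gram_eq_submatrix (xs : ι → X) : gram k xs = (Matrix.of k).submatrix xs xs :=
  rfl

theorem dotProduct_gram_mulVec (xs : ι → X) (a b : ι → ℝ) :
    a ⬝ᵥ (gram k xs *ᵥ b) = ∑ i, ∑ j, a i * b j * k (xs i) (xs j) := by
  simp only [dotProduct, Matrix.mulVec, _root_.gram, Finset.mul_sum]
  exact sum_congr rfl fun i _ => sum_congr rfl fun j _ => by ring

theorem kernel_symm (hk : (Matrix.of k).PosSemidef) (x y : X) : k x y = k y x := by
  simpa using (hk.isHermitian.apply x y).symm

theorem gram_posSemidef (hk : (Matrix.of k).PosSemidef) (z : ι → X) : (gram k z).PosSemidef :=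
  hk.submatrix z

theorem gram_transpose (hk : (Matrix.of k).PosSemidef) (z : ι → X) : (gram k z)ᵀ = gram k z :=
  Matrix.ext fun i j => kernel_symm hk (z j) (z i)

theorem dotProduct_gram_mulVec_nonneg (hk : (Matrix.of k).PosSemidef) (z : ι → X) (a : ι → ℝ) :
    0 ≤ a ⬝ᵥ (gram k z *ᵥ a) := by
  simpa using (gram_posSemidef hk z).dotProduct_mulVec_nonneg a

end Kernel

section SqDist

variable {X : Type*} {k : X → X → ℝ} {ι : Type*} [Fintype ι]

/-- The squared RKHS distance `‖k(y, ·) - ∑ᵢ aᵢ k(zᵢ, ·)‖²`. -/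
def kernelSqDist (k : X → X → ℝ) (z : ι → X) (y : X) (a : ι → ℝ) : ℝ :=
  k y y - 2 * (a ⬝ᵥ kvec k z y) + a ⬝ᵥ (gram k z *ᵥ a)

theorem kernelSqDist_eq_dotProduct_gram_mulVec (hk : (Matrix.of k).PosSemidef) (z : ι → X)
    (y : X) (a : ι → ℝ) :
    kernelSqDist k z y a =
      Sum.elim (-a) 1 ⬝ᵥ (gram k (Sum.elim z fun _ : Unit => y) *ᵥ Sum.elim (-a) 1) := by
  simp only [kernelSqDist, dotProduct, Matrix.mulVec, Fintype.sum_sum_type, _root_.gram, kvec,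
    Sum.elim_inl, Sum.elim_inr, Pi.neg_apply, Pi.one_apply, Fintype.sum_unique, kernel_symm hk y]
  simp only [mul_add, Finset.mul_sum, Finset.sum_add_distrib, Finset.sum_neg_distrib, neg_mul,
    mul_neg, neg_neg]
  ring_nf
  simp only [← Finset.sum_mul, mul_comm (k (z _) y)]
  ring

theorem kernelSqDist_nonneg (hk : (Matrix.of k).PosSemidef) (z : ι → X) (y : X) (a : ι → ℝ) :
    0 ≤ kernelSqDist k z y a := by
  rw [kernelSqDist_eq_dotProduct_gram_mulVec hk]
  exact dotProduct_gram_mulVec_nonneg hk _ _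

theorem le_kernelSqDist_comp {κ : Type*} [Fintype κ] {z : κ → X} {y : X} {s : ℝ}
    (hs : ∀ b, s ≤ kernelSqDist k z y b) (e : ι → κ) (a : ι → ℝ) :
    s ≤ kernelSqDist k (z ∘ e) y a := by
  classical
  set b : κ → ℝ := fun j => ∑ i, if e i = j then a i else 0
  have hdot (g : κ → ℝ) : b ⬝ᵥ g = a ⬝ᵥ (g ∘ e) := by
    simp only [dotProduct, b, Finset.sum_mul, ite_mul, zero_mul]
    rw [Finset.sum_comm]
    simp
  have hmulVec : (gram k z *ᵥ b) ∘ e = gram k (z ∘ e) *ᵥ a := funext fun i => by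
    simp only [Function.comp_apply, Matrix.mulVec, dotProduct_comm _ b, hdot]
    exact dotProduct_comm _ _
  convert hs b using 1
  rw [kernelSqDist, kernelSqDist, hdot, hdot, hmulVec]
  rfl

end SqDist

section PreRKHS

variable {X : Type*} {k : X → X → ℝ} {n : ℕ} {c : Fin n → ℝ} {xv : Fin n → X} {f : X → ℝ}

theorem sq_sum_mul_apply_le (hk : (Matrix.of k).PosSemidef)
    (hf : ∀ x, f x = ∑ i, c i * k (xv i) x) {κ : Type*} [Fintype κ] (ys : κ → X) (b : κ → ℝ) :
    (∑ j, b j * f (ys j)) ^ 2 ≤ (c ⬝ᵥ (gram k xv *ᵥ c)) * (b ⬝ᵥ (gram k ys *ᵥ b)) := by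
  rw [gram_eq_submatrix, gram_eq_submatrix]
  convert hk.dotProduct_submatrix_mulVec_sq_le xv ys c b using 2
  simp only [hf, dotProduct, Matrix.mulVec, Matrix.submatrix_apply, Matrix.of_apply,
    Finset.mul_sum]
  rw [Finset.sum_comm]
  exact sum_congr rfl fun i _ => sum_congr rfl fun j _ => by ring

theorem abs_apply_le (hk : (Matrix.of k).PosSemidef) (hk1 : ∀ x, k x x ≤ 1)
    (hf : ∀ x, f x = ∑ i, c i * k (xv i) x) {B : ℝ} (hB : 0 ≤ B)
    (hfB : c ⬝ᵥ (gram k xv *ᵥ c) ≤ B ^ 2) (y : X) : |f y| ≤ B := by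
  have hy : f y ^ 2 ≤ (c ⬝ᵥ (gram k xv *ᵥ c)) * k y y := by
    simpa [dotProduct, Matrix.mulVec, _root_.gram] using
      sq_sum_mul_apply_le hk hf (fun _ : Unit => y) 1
  refine abs_le_of_sq_le_sq (hy.trans ?_) hB
  simpa using mul_le_mul hfB (hk1 y) (by simpa using hk.diag_nonneg) (sq_nonneg B)

theorem sq_sub_dotProduct_le (hk : (Matrix.of k).PosSemidef)
    (hf : ∀ x, f x = ∑ i, c i * k (xv i) x) {ι : Type*} [Fintype ι] (z : ι → X) (y : X)
    (a : ι → ℝ) :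
    (f y - a ⬝ᵥ (f ∘ z)) ^ 2 ≤ (c ⬝ᵥ (gram k xv *ᵥ c)) * kernelSqDist k z y a := by
  rw [kernelSqDist_eq_dotProduct_gram_mulVec hk]
  convert sq_sum_mul_apply_le hk hf (Sum.elim z fun _ : Unit => y) (Sum.elim (-a) 1) using 2
  simp [Fintype.sum_sum_type, dotProduct]
  ring

end PreRKHS

theorem Matrix.mulVec_nonsing_inv_mulVec {ι R : Type*} [Fintype ι] [DecidableEq ι] [CommRing R]
    {M : Matrix ι ι R} (hM : IsUnit M.det) (v : ι → R) : M *ᵥ (M⁻¹ *ᵥ v) = v := by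
  rw [Matrix.mulVec_mulVec, Matrix.mul_nonsing_inv _ hM, Matrix.one_mulVec]

section Posterior

variable {X : Type*} {k : X → X → ℝ} {ι : Type*} [Fintype ι] [DecidableEq ι] {z : ι → X}

theorem kernelSqDist_inv_mulVec (hK : IsUnit (gram k z).det) (y : X) :
    kernelSqDist k z y ((gram k z)⁻¹ *ᵥ kvec k z y) =
      k y y - kvec k z y ⬝ᵥ ((gram k z)⁻¹ *ᵥ kvec k z y) := by
  rw [kernelSqDist, Matrix.mulVec_nonsing_inv_mulVec hK, dotProduct_comm]
  ring

theorem postStdInv_sq (hk : (Matrix.of k).PosSemidef) (hK : IsUnit (gram k z).det) (y : X) :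
    postStdInv k z y ^ 2 = kernelSqDist k z y ((gram k z)⁻¹ *ᵥ kvec k z y) := by
  rw [kernelSqDist_inv_mulVec hK, postStdInv, Real.sq_sqrt]
  exact kernelSqDist_inv_mulVec hK y ▸ kernelSqDist_nonneg hk z y _

theorem postStdInv_sq_le_kernelSqDist (hk : (Matrix.of k).PosSemidef)
    (hK : IsUnit (gram k z).det) (y : X) (a : ι → ℝ) :
    postStdInv k z y ^ 2 ≤ kernelSqDist k z y a := by
  set w := (gram k z)⁻¹ *ᵥ kvec k z y
  have hGw : gram k z *ᵥ w = kvec k z y := Matrix.mulVec_nonsing_inv_mulVec hK _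
  -- `w` solves the normal equations, so `a ↦ kernelSqDist k z y a` is minimal there
  have hsplit : kernelSqDist k z y a =
      kernelSqDist k z y w + (a - w) ⬝ᵥ (gram k z *ᵥ (a - w)) := by
    have hwa : w ⬝ᵥ (gram k z *ᵥ a) = a ⬝ᵥ kvec k z y := by
      rw [Matrix.dotProduct_mulVec, ← Matrix.mulVec_transpose, gram_transpose hk, hGw,
        dotProduct_comm]
    simp only [kernelSqDist, Matrix.mulVec_sub, dotProduct_sub, sub_dotProduct, hGw, hwa]
    rw [dotProduct_comm w (kvec k z y)]
    ring
  rw [postStdInv_sq hk hK, hsplit]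
  exact le_add_of_nonneg_right (dotProduct_gram_mulVec_nonneg hk z _)

theorem postMean_eq (hk : (Matrix.of k).PosSemidef) (f : X → ℝ) (y : X) :
    postMean k z f y = ((gram k z)⁻¹ *ᵥ kvec k z y) ⬝ᵥ (f ∘ z) := by
  rw [postMean, Matrix.dotProduct_mulVec, ← Matrix.mulVec_transpose, Matrix.transpose_nonsing_inv,
    gram_transpose hk]
  rfl

variable {n : ℕ} {c : Fin n → ℝ} {xv : Fin n → X} {f : X → ℝ} {B : ℝ}

theorem abs_sub_postMean_le (hk : (Matrix.of k).PosSemidef)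
    (hf : ∀ x, f x = ∑ i, c i * k (xv i) x) (hB : 0 ≤ B) (hfB : c ⬝ᵥ (gram k xv *ᵥ c) ≤ B ^ 2)
    (hK : IsUnit (gram k z).det) (y : X) :
    |f y - postMean k z f y| ≤ B * postStdInv k z y := by
  refine abs_le_of_sq_le_sq ?_ (mul_nonneg hB (Real.sqrt_nonneg _))
  rw [postMean_eq hk, mul_pow, postStdInv_sq hk hK]
  exact (sq_sub_dotProduct_le hk hf z y _).trans
    (mul_le_mul_of_nonneg_right hfB (kernelSqDist_nonneg hk z y _))

theorem sub_le_two_mul_min_postStdInv (hk : (Matrix.of k).PosSemidef) (hk1 : ∀ x, k x x ≤ 1)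
    (hf : ∀ x, f x = ∑ i, c i * k (xv i) x) (hB : 0 ≤ B) (hfB : c ⬝ᵥ (gram k xv *ᵥ c) ≤ B ^ 2)
    (hK : IsUnit (gram k z).det) {x' x : X}
    (hucb : postMean k z f x' + B * postStdInv k z x' ≤ postMean k z f x + B * postStdInv k z x) :
    f x' - f x ≤ 2 * B * min 1 (postStdInv k z x) := by
  rw [mul_min_of_nonneg _ _ (by positivity), mul_one]
  have h' := abs_le.mp (abs_sub_postMean_le hk hf hB hfB hK x')
  have h := abs_le.mp (abs_sub_postMean_le hk hf hB hfB hK x)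
  refine le_min ?_ (by linarith)
  linarith [abs_le.mp (abs_apply_le hk hk1 hf hB hfB x'),
    abs_le.mp (abs_apply_le hk hk1 hf hB hfB x)]

end Posterior

section LogDet

variable {X : Type*} {k : X → X → ℝ} {lam : ℝ}

section Regularized

variable {ι : Type*} [Fintype ι] [DecidableEq ι]

theorem posDef_gram_add_smul_one (hk : (Matrix.of k).PosSemidef) (z : ι → X) (hlam : lam ≠ 0) :
    (gram k z + lam ^ 2 • (1 : Matrix ι ι ℝ)).PosDef :=
  Matrix.PosDef.posSemidef_add (gram_posSemidef hk z) (Matrix.PosDef.one.smul (by positivity))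

theorem isUnit_det_gram_add_smul_one (hk : (Matrix.of k).PosSemidef) (z : ι → X)
    (hlam : lam ≠ 0) : IsUnit (gram k z + lam ^ 2 • (1 : Matrix ι ι ℝ)).det :=
  (posDef_gram_add_smul_one hk z hlam).det_pos.ne'.isUnit

theorem le_postVar (hk : (Matrix.of k).PosSemidef) {z : ι → X} {y : X} (hlam : lam ≠ 0) {s : ℝ}
    (hs : ∀ a, s ≤ kernelSqDist k z y a) : s ≤ postVar k z lam y := by
  set b := (gram k z + lam ^ 2 • (1 : Matrix ι ι ℝ))⁻¹ *ᵥ kvec k z y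
  have hAb := Matrix.mulVec_nonsing_inv_mulVec (isUnit_det_gram_add_smul_one hk z hlam)
    (kvec k z y)
  -- `postVar` is `kernelSqDist` plus the ridge penalty `λ² ‖b‖²` at the ridge solution `b`
  have hb : kernelSqDist k z y b + lam ^ 2 * (b ⬝ᵥ b) = postVar k z lam y := by
    rw [Matrix.add_mulVec, Matrix.smul_mulVec, Matrix.one_mulVec] at hAb
    have := congrArg (b ⬝ᵥ ·) hAb
    simp only [dotProduct_add, dotProduct_smul, smul_eq_mul] at this
    rw [kernelSqDist, postVar, dotProduct_comm (kvec k z y)]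
    linarith
  calc s ≤ kernelSqDist k z y b := hs b
    _ ≤ postVar k z lam y := hb ▸ le_add_of_nonneg_right
        (mul_nonneg (sq_nonneg lam) (sum_nonneg fun i _ => mul_self_nonneg (b i)))

theorem det_gram_sumElim_add_smul_one (hk : (Matrix.of k).PosSemidef) (z : ι → X) (y : X)
    (hlam : lam ≠ 0) :
    (gram k (Sum.elim z fun _ : Fin 1 => y) + lam ^ 2 • 1).det =
      (gram k z + lam ^ 2 • 1).det * (lam ^ 2 + postVar k z lam y) := by
  have hblocks : gram k (Sum.elim z fun _ : Fin 1 => y) + lam ^ 2 • 1 =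
      Matrix.fromBlocks (gram k z + lam ^ 2 • 1) (Matrix.of fun i _ => k (z i) y)
        (Matrix.of fun _ j => k y (z j)) (Matrix.of fun _ _ => k y y + lam ^ 2) := by
    ext (i | i) (j | j) <;> simp [_root_.gram, Matrix.one_apply, Fin.fin_one_eq_zero]
  have := Matrix.invertibleOfIsUnitDet _ (isUnit_det_gram_add_smul_one hk z hlam)
  rw [hblocks, Matrix.det_fromBlocks₁₁, Matrix.det_fin_one, Matrix.invOf_eq_nonsing_inv]
  congr 1
  simp only [postVar, Matrix.sub_apply, Matrix.mul_apply, Matrix.of_apply, dotProduct,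
    Matrix.mulVec, kvec, kernel_symm hk y, Finset.sum_mul, Finset.mul_sum]
  rw [Finset.sum_comm]
  ring_nf

end Regularized

theorem pow_le_det_gram_add_smul_one (hk : (Matrix.of k).PosSemidef) (hlam : lam ≠ 0) :
    ∀ {m : ℕ} (p : Fin m → X), (∀ i a, 2 * lam ^ 2 ≤ kernelSqDist k (pre p i) (p i) a) →
      (3 * lam ^ 2) ^ m ≤ (gram k p + lam ^ 2 • 1).det
  | 0, p, _ => by simp
  | m + 1, p, hp => by
    have hsplit : p ∘ finSumFinEquiv =
        Sum.elim (fun i : Fin m => p i.castSucc) fun _ : Fin 1 => p (Fin.last m) := by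
      ext (i | i)
      · rfl
      · rw [Fin.fin_one_eq_zero i]
        rfl
    have hdet : (gram k p + lam ^ 2 • 1).det =
        (gram k (p ∘ finSumFinEquiv) + lam ^ 2 • 1).det := by
      rw [← Matrix.det_submatrix_equiv_self finSumFinEquiv]
      congr 1
      ext i j
      simp [_root_.gram, Matrix.one_apply]
    have hlast : 2 * lam ^ 2 ≤ postVar k (fun i : Fin m => p i.castSucc) lam (p (Fin.last m)) :=
      le_postVar hk hlam (hp (Fin.last m))
    rw [hdet, hsplit, det_gram_sumElim_add_smul_one hk _ _ hlam, pow_succ]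
    exact mul_le_mul (pow_le_det_gram_add_smul_one hk hlam _ fun i => hp i.castSucc)
      (by linarith) (by positivity) (posDef_gram_add_smul_one hk _ hlam).det_pos.le

theorem ofReal_le_mig (hk : (Matrix.of k).PosSemidef) (hlam : lam ≠ 0) {m : ℕ}
    (p : Fin m → X) (hp : ∀ i a, 2 * lam ^ 2 ≤ kernelSqDist k (pre p i) (p i) a) :
    ENNReal.ofReal (m * Real.log 3 / 2) ≤ mig k m lam := by
  refine le_iSup_of_le p (ENNReal.ofReal_le_ofReal ?_)
  have hscale : (1 : Matrix (Fin m) (Fin m) ℝ) + (lam ^ 2)⁻¹ • gram k p =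
      (lam ^ 2)⁻¹ • (gram k p + lam ^ 2 • 1) := by
    rw [smul_add, smul_smul, inv_mul_cancel₀ (by positivity), one_smul, add_comm]
  have h3 : (3 : ℝ) ^ m ≤ (1 + (lam ^ 2)⁻¹ • gram k p).det := by
    rw [hscale, Matrix.det_smul, Fintype.card_fin]
    calc (3 : ℝ) ^ m = ((lam ^ 2)⁻¹) ^ m * (3 * lam ^ 2) ^ m := by
          rw [← mul_pow]; field_simp
      _ ≤ _ := by gcongr; exact pow_le_det_gram_add_smul_one hk hlam p hp
  have := Real.log_le_log (by positivity) h3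
  rw [Real.log_pow] at this
  linarith

theorem card_filter_lt_of_mig_lt (hk : (Matrix.of k).PosSemidef) {xseq : ℕ → X}
    (hinv : ∀ t, IsUnit (gram k (prefN xseq t)).det) {m : ℕ} (hlam : lam ≠ 0)
    (hmig : mig k m lam < ENNReal.ofReal (m * Real.log 3 / 2)) (s : Finset ℕ) :
    #{t ∈ s | 2 * lam ^ 2 ≤ postStdInv k (prefN xseq t) (xseq t) ^ 2} < m := by
  by_contra! h
  set emb := Finset.orderEmbOfCardLe _ h
  refine hmig.not_ge (ofReal_le_mig hk hlam (fun i => xseq (emb i)) fun i a => ?_)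
  have hi := (mem_filter.mp (Finset.orderEmbOfCardLe_mem _ h i)).2
  let e : Fin i → Fin (emb i) := fun l =>
    ⟨emb ⟨l, l.2.trans i.2⟩, emb.strictMono (show (⟨l, _⟩ : Fin m) < i from l.2)⟩
  exact le_kernelSqDist_comp
    (fun b => hi.trans (postStdInv_sq_le_kernelSqDist hk (hinv _) _ b)) e a

end LogDet

def maternLamSq (C d ν t : ℝ) : ℝ :=
  C * t ^ (-(2 * ν / d)) * Real.log t ^ (2 * ν / d)

section Matern

variable {C d ν : ℝ}

theorem maternLamSq_pos (hC : 0 < C) {t : ℝ} (ht : 1 < t) : 0 < maternLamSq C d ν t :=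
  mul_pos (mul_pos hC (Real.rpow_pos_of_pos (by linarith) _))
    (Real.rpow_pos_of_pos (Real.log_pos ht) _)

theorem sqrt_maternLamSq (hC : 0 ≤ C) {t : ℝ} (ht : 1 ≤ t) :
    √(maternLamSq C d ν t) = √C * t ^ (-(ν / d)) * Real.log t ^ (ν / d) := by
  have hL := Real.log_nonneg ht
  have hsq {x : ℝ} (hx : 0 ≤ x) : x ^ (2 * ν / d) = (x ^ (ν / d)) ^ 2 := by
    rw [← Real.rpow_mul_natCast hx]; ring_nf
  rw [maternLamSq, Real.rpow_neg (by linarith), hsq (by linarith), hsq hL, ← inv_pow,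
    Real.sqrt_mul (by positivity), Real.sqrt_mul hC, Real.sqrt_sq (by positivity),
    Real.sqrt_sq (by positivity), Real.rpow_neg (by linarith)]

theorem div_half_maternLamSq {Ctil m : ℝ} (hm : 0 < m) :
    m / (maternLamSq Ctil d ν m / 2) =
      2 * m ^ (1 + 2 * ν / d) / (Ctil * Real.log m ^ (2 * ν / d)) := by
  rw [maternLamSq, Real.rpow_neg hm.le, Real.rpow_add hm, Real.rpow_one]
  field_simp

theorem rpow_mul_log_rpow_le (hd : 0 < d) (hν : 0 < ν) {Ctil m : ℝ} (hCtil : 1 ≤ Ctil)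
    (hm : Real.exp 1 ≤ m) (hw : maternLamSq Ctil d ν m ≤ 1) :
    (m / (maternLamSq Ctil d ν m / 2)) ^ (d / (2 * ν + d)) *
        Real.log (m / (maternLamSq Ctil d ν m / 2)) ^ (2 * ν / (2 * ν + d)) ≤
      2 ^ (d / (2 * ν + d)) * (2 + 2 * ν / d) ^ (2 * ν / (2 * ν + d)) * m /
        Ctil ^ (d / (2 * ν + d)) := by
  have hm1 : 1 < m := lt_of_lt_of_le (by linarith [Real.add_one_le_exp 1]) hm
  have hm0 : 0 < m := by linarith
  have hL1 : 1 ≤ Real.log m := (Real.le_log_iff_exp_le hm0).mpr hm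
  have hw0 : 0 < maternLamSq Ctil d ν m := maternLamSq_pos (by linarith) hm1
  have hX1 : 1 ≤ m / (maternLamSq Ctil d ν m / 2) := by
    rw [le_div_iff₀ (by linarith)]
    nlinarith
  rw [div_half_maternLamSq hm0] at hX1 ⊢
  set r := 2 * ν / d
  set α := d / (2 * ν + d)
  set β := 2 * ν / (2 * ν + d)
  set L := Real.log m
  have hL : 0 < L := by linarith
  have hr : 0 < r := by positivity
  have hrα : r * α = β := by simp only [r, α, β]; field_simp
  have hrα1 : (1 + r) * α = 1 := by simp only [r, α]; field_simp; ring
  have hXα : (2 * m ^ (1 + r) / (Ctil * L ^ r)) ^ α = 2 ^ α * m / (Ctil ^ α * L ^ β) := by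
    rw [Real.div_rpow (by positivity) (by positivity), Real.mul_rpow (by norm_num) (by positivity),
      Real.mul_rpow (by positivity) (by positivity), ← Real.rpow_mul hm0.le,
      ← Real.rpow_mul hL.le, hrα1, hrα, Real.rpow_one]
  have hlog : Real.log (2 * m ^ (1 + r) / (Ctil * L ^ r)) ≤ (2 + r) * L := by
    rw [Real.log_div (by positivity) (by positivity), Real.log_mul (by norm_num) (by positivity),
      Real.log_mul (by positivity) (by positivity), Real.log_rpow hm0, Real.log_rpow hL]
    have := Real.log_two_lt_d9
    have := Real.log_nonneg hCtil
    have := mul_nonneg hr.le (Real.log_nonneg hL1)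
    nlinarith
  calc (2 * m ^ (1 + r) / (Ctil * L ^ r)) ^ α * Real.log (2 * m ^ (1 + r) / (Ctil * L ^ r)) ^ β
      ≤ 2 ^ α * m / (Ctil ^ α * L ^ β) * ((2 + r) ^ β * L ^ β) := by
        rw [hXα, ← Real.mul_rpow (by positivity) hL.le]
        gcongr
        exact Real.log_nonneg hX1
    _ = 2 ^ α * (2 + r) ^ β * m / Ctil ^ α := by field_simp

theorem matern_gain_lt (hd : 0 < d) (hν : 0 < ν) (hC : 0 < C) {Ctil m : ℝ}
    (hCtil1 : 1 ≤ Ctil) (hCtil : (2 + 2 * ν / d) ^ (2 * ν / d) * (6 * C) ^ (1 + 2 * ν / d) ≤ Ctil)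
    (hm : Real.exp 1 ≤ m) (hw : maternLamSq Ctil d ν m ≤ 1) :
    C * (m / (maternLamSq Ctil d ν m / 2)) ^ (d / (2 * ν + d)) *
        Real.log (m / (maternLamSq Ctil d ν m / 2)) ^ (2 * ν / (2 * ν + d)) <
      m * Real.log 3 / 2 := by
  have hm0 : 0 < m := (Real.exp_pos 1).trans_le hm
  have hbound := rpow_mul_log_rpow_le hd hν hCtil1 hm hw
  set r := 2 * ν / d
  set α := d / (2 * ν + d)
  set β := 2 * ν / (2 * ν + d)
  have hr : 0 < r := by positivity
  have hα : 0 < α := by positivity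
  have hα1 : α ≤ 1 := (div_le_one (by positivity)).mpr (by linarith)
  have hrα : r * α = β := by simp only [r, α, β]; field_simp
  have hrα1 : (1 + r) * α = 1 := by simp only [r, α]; field_simp; ring
  have hCtilα : (2 + r) ^ β * (6 * C) ≤ Ctil ^ α := by
    have := Real.rpow_le_rpow (by positivity) hCtil hα.le
    rwa [Real.mul_rpow (by positivity) (by positivity), ← Real.rpow_mul (by positivity),
      ← Real.rpow_mul (by positivity), hrα, hrα1, Real.rpow_one] at this
  have h2α : (2 : ℝ) ^ α ≤ 2 := by
    simpa using Real.rpow_le_rpow_of_exponent_le (by norm_num : (1 : ℝ) ≤ 2) hα1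
  have hlog3 : 1 < Real.log 3 := by
    rw [Real.lt_log_iff_exp_lt (by norm_num)]
    linarith [Real.exp_one_lt_d9]
  rw [mul_assoc]
  calc C * (_ * _) ≤ C * (2 ^ α * (2 + r) ^ β * m / Ctil ^ α) := by gcongr
    _ ≤ C * (2 ^ α * (2 + r) ^ β * m / ((2 + r) ^ β * (6 * C))) := by gcongr
    _ = 2 ^ α * m / 6 := by field_simp
    _ < m * Real.log 3 / 2 := by nlinarith

end Matern

theorem sum_le_sum_range_of_card_filter_lt {ι : Type*} (v : ι → ℝ) :
    ∀ (s : Finset ι) (c : ℕ → ℝ), (∀ m, 1 ≤ m → #{t ∈ s | c m < v t} < m) →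
      ∑ t ∈ s, v t ≤ ∑ i ∈ range #s, c (i + 1) := by
  classical
  intro s
  induction hs : #s generalizing s with
  | zero => simp [card_eq_zero.mp hs]
  | succ n ih =>
    intro c hc
    obtain ⟨t₀, ht₀, hmax⟩ := exists_max_image s v (card_pos.mp (by omega))
    have hfirst : v t₀ ≤ c 1 := by
      by_contra! h
      have := hc 1 le_rfl
      have : 0 < #{t ∈ s | c 1 < v t} := card_pos.mpr ⟨t₀, mem_filter.mpr ⟨ht₀, h⟩⟩
      omega
    have hrest : ∑ t ∈ s.erase t₀, v t ≤ ∑ i ∈ range n, c (i + 1 + 1) := by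
      refine ih _ (by rw [card_erase_of_mem ht₀, hs]; rfl) (fun m => c (m + 1)) fun m hm => ?_
      by_cases hm' : c (m + 1) < v t₀
      · rw [filter_erase, card_erase_of_mem (mem_filter.mpr ⟨ht₀, hm'⟩)]
        have := hc (m + 1) (by omega)
        omega
      · rw [filter_false_of_mem fun t ht => not_lt.mpr ((hmax t (mem_of_mem_erase ht)).trans
          (not_lt.mp hm')), card_empty]
        exact hm
    rw [← add_sum_erase s v ht₀, sum_range_succ']
    linarith

theorem rpow_sub_one_add_mul_rpow_le {q t : ℝ} (hq0 : 0 ≤ q) (hq1 : q ≤ 1) (ht : 1 ≤ t) :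
    (t - 1) ^ q + q * t ^ (q - 1) ≤ t ^ q := by
  have ht0 : 0 < t := by linarith
  have hbern := rpow_one_add_le_one_add_mul_self
    (by rw [neg_le_neg_iff]; exact inv_le_one_of_one_le₀ ht : -1 ≤ -t⁻¹) hq0 hq1
  have hsplit : (t - 1) ^ q = t ^ q * (1 + -t⁻¹) ^ q := by
    rw [← Real.mul_rpow ht0.le (by linarith [inv_le_one_of_one_le₀ ht])]
    congr 1
    field_simp
    ring
  rw [hsplit, Real.rpow_sub_one ht0.ne']
  have := mul_le_mul_of_nonneg_left hbern (Real.rpow_nonneg ht0.le q)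
  calc _ ≤ t ^ q * (1 + q * -t⁻¹) + q * (t ^ q / t) := by linarith
    _ = t ^ q := by field_simp; ring

theorem sum_range_rpow_neg_le {p : ℝ} (hp0 : 0 ≤ p) (hp1 : p < 1) (T : ℕ) :
    ∑ i ∈ range T, ((i : ℝ) + 1) ^ (-p) ≤ (T : ℝ) ^ (1 - p) / (1 - p) := by
  induction T with
  | zero => simp [Real.zero_rpow (by linarith : 1 - p ≠ 0)]
  | succ n ih =>
    have hstep := rpow_sub_one_add_mul_rpow_le (q := 1 - p) (t := n + 1) (by linarith)
      (by linarith) (by linarith [n.cast_nonneg (α := ℝ)])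
    rw [add_sub_cancel_right, show 1 - p - 1 = -p by ring] at hstep
    rw [sum_range_succ, Nat.cast_succ, le_div_iff₀ (by linarith), add_mul]
    rw [le_div_iff₀ (by linarith)] at ih
    linarith

theorem sum_range_ite_sqrt_maternLamSq_le {C d ν : ℝ} (hC : 0 ≤ C) (hν : 0 < ν) (hνd : ν < d)
    (N T : ℕ) :
    ∑ i ∈ range T, (if i + 1 ≤ N then (1 : ℝ) else √(maternLamSq C d ν (i + 1))) ≤
      N + √C * (d / (d - ν)) * (T : ℝ) ^ ((d - ν) / d) * Real.log T ^ (ν / d) := by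
  have hd : 0 < d := hν.trans hνd
  have hp : ν / d < 1 := (div_lt_one hd).mpr hνd
  have hlogT (i : ℕ) (hi : i ∈ range T) :
      Real.log ((i : ℝ) + 1) ^ (ν / d) ≤ Real.log T ^ (ν / d) := by
    have : (i : ℝ) + 1 ≤ T := by exact_mod_cast mem_range.mp hi
    gcongr
    exact Real.log_nonneg (by linarith [i.cast_nonneg (α := ℝ)])
  have hterm (i : ℕ) (hi : i ∈ range T) :
      (if i + 1 ≤ N then (1 : ℝ) else √(maternLamSq C d ν (i + 1))) ≤
        (if i + 1 ≤ N then 1 else 0) + √C * Real.log T ^ (ν / d) * ((i : ℝ) + 1) ^ (-(ν / d)) := by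
    split_ifs
    · have : 0 ≤ √C * Real.log T ^ (ν / d) * ((i : ℝ) + 1) ^ (-(ν / d)) := by positivity
      linarith
    · rw [sqrt_maternLamSq hC (by linarith [i.cast_nonneg (α := ℝ)]), zero_add]
      have := hlogT i hi
      have : 0 ≤ √C * ((i : ℝ) + 1) ^ (-(ν / d)) := by positivity
      nlinarith
  have hcount : ∑ i ∈ range T, (if i + 1 ≤ N then (1 : ℝ) else 0) ≤ N := by
    rw [sum_boole]
    exact_mod_cast (card_le_card fun i hi => mem_range.mpr (by simp at hi; omega)).trans
      (card_range N).le
  calc _ ≤ ∑ i ∈ range T, ((if i + 1 ≤ N then (1 : ℝ) else 0) +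
        √C * Real.log T ^ (ν / d) * ((i : ℝ) + 1) ^ (-(ν / d))) := sum_le_sum hterm
    _ = ∑ i ∈ range T, (if i + 1 ≤ N then (1 : ℝ) else 0) +
        √C * Real.log T ^ (ν / d) * ∑ i ∈ range T, ((i : ℝ) + 1) ^ (-(ν / d)) := by
      rw [sum_add_distrib, mul_sum]
    _ ≤ N + √C * Real.log T ^ (ν / d) * ((T : ℝ) ^ (1 - ν / d) / (1 - ν / d)) := by
      gcongr
      exact sum_range_rpow_neg_le (by positivity) hp T
    _ = _ := by
      rw [show 1 - ν / d = (d - ν) / d by field_simp]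
      field_simp

def MaternGainBound {X : Type*} (k : X → X → ℝ) (C lamBar : ℝ) (T0 : ℕ) (d ν : ℝ) : Prop :=
  ∀ lam : ℝ, 0 < lam → lam ≤ lamBar → ∀ t : ℕ, T0 ≤ t →
    mig k t lam ≤ ENNReal.ofReal
      (C * ((t : ℝ) / lam ^ 2) ^ (d / (2 * ν + d)) *
        Real.log ((t : ℝ) / lam ^ 2) ^ (2 * ν / (2 * ν + d)))

section GPUCB

variable {X : Type*} {k : X → X → ℝ} {C lamBar Ctil d ν : ℝ} {T0 : ℕ} {xseq : ℕ → X}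

theorem card_filter_lt_of_maternGainBound (hk : (Matrix.of k).PosSemidef)
    (hinv : ∀ t, IsUnit (gram k (prefN xseq t)).det) (hgain : MaternGainBound k C lamBar T0 d ν)
    (hd : 0 < d) (hν : 0 < ν) (hC : 0 < C) (hlamBar : 0 ≤ lamBar) (hCtil1 : 1 ≤ Ctil)
    (hCtil : (2 + 2 * ν / d) ^ (2 * ν / d) * (6 * C) ^ (1 + 2 * ν / d) ≤ Ctil) {m : ℕ}
    (hm : Real.exp 1 ≤ m) (hmT0 : T0 ≤ m) (hmlam : maternLamSq Ctil d ν m ≤ lamBar ^ 2)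
    (s : Finset ℕ) :
    #{t ∈ s | √(maternLamSq Ctil d ν m) < min 1 (postStdInv k (prefN xseq t) (xseq t))} < m := by
  by_cases hw : maternLamSq Ctil d ν m ≤ 1
  · have hw0 : 0 < maternLamSq Ctil d ν m :=
      maternLamSq_pos (by linarith) (lt_of_lt_of_le (Real.one_lt_exp_iff.mpr one_pos) hm)
    set lam := √(maternLamSq Ctil d ν m / 2)
    have hlam2 : lam ^ 2 = maternLamSq Ctil d ν m / 2 := Real.sq_sqrt (by positivity)
    have hlam : 0 < lam := Real.sqrt_pos.mpr (by positivity)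
    have hlamle : lam ≤ lamBar := Real.sqrt_le_iff.mpr ⟨hlamBar, by linarith⟩
    have hpos : 0 < (m : ℝ) * Real.log 3 / 2 :=
      div_pos (mul_pos ((Real.exp_pos 1).trans_le hm) (Real.log_pos (by norm_num))) two_pos
    have hmig : mig k m lam < ENNReal.ofReal (m * Real.log 3 / 2) :=
      (hgain lam hlam hlamle m hmT0).trans_lt <| (ENNReal.ofReal_lt_ofReal_iff hpos).mpr
        (hlam2 ▸ matern_gain_lt hd hν hC hCtil1 hCtil hm hw)
    refine (card_le_card fun t ht => ?_).trans_lt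
      (card_filter_lt_of_mig_lt hk hinv hlam.ne' hmig s)
    rw [mem_filter] at ht ⊢
    rw [hlam2, mul_div_cancel₀ _ two_ne_zero]
    exact ⟨ht.1, (Real.sqrt_le_left (Real.sqrt_nonneg _)).mp (ht.2.le.trans (min_le_right _ _))⟩
  · have h1 : 1 < √(maternLamSq Ctil d ν m) := (Real.lt_sqrt zero_le_one).mpr (by linarith)
    rw [filter_false_of_mem fun t _ h => lt_asymm h1 (h.trans_le (min_le_left _ _)), card_empty]
    exact_mod_cast (Real.exp_pos 1).trans_le hm

theorem sum_min_one_postStdInv_le (hk : (Matrix.of k).PosSemidef)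
    (hinv : ∀ t, IsUnit (gram k (prefN xseq t)).det) (hgain : MaternGainBound k C lamBar T0 d ν)
    (hν : 0 < ν) (hνd : ν < d) (hC : 0 < C) (hlamBar : 0 ≤ lamBar) (hCtil1 : 1 ≤ Ctil)
    (hCtil : (2 + 2 * ν / d) ^ (2 * ν / d) * (6 * C) ^ (1 + 2 * ν / d) ≤ Ctil) {TMat : ℕ}
    (hTMat : 2 ≤ TMat) (hTMatT0 : T0 ≤ TMat)
    (hTMatlam : ∀ t : ℕ, TMat ≤ t → maternLamSq Ctil d ν t ≤ lamBar ^ 2) (T : ℕ) :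
    ∑ t ∈ range T, min 1 (postStdInv k (prefN xseq t) (xseq t)) ≤
      TMat + √Ctil * (d / (d - ν)) * (T : ℝ) ^ ((d - ν) / d) * Real.log T ^ (ν / d) := by
  refine (sum_le_sum_range_of_card_filter_lt _ _
    (fun m => if m ≤ TMat then 1 else √(maternLamSq Ctil d ν m)) fun m hm => ?_).trans ?_
  · split_ifs with hmT
    · rw [filter_false_of_mem fun t _ h => (min_le_left _ _).not_gt h, card_empty]
      exact hm
    · have hm3 : (3 : ℝ) ≤ m := by exact_mod_cast (by omega : 3 ≤ m)
      exact card_filter_lt_of_maternGainBound hk hinv hgain (hν.trans hνd) hν hC hlamBar hCtil1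
        hCtil (by linarith [Real.exp_one_lt_d9]) (by omega) (hTMatlam m (by omega)) _
  · rw [card_range]
    push_cast
    exact sum_range_ite_sqrt_maternLamSq_le (by linarith) hν hνd TMat T

end GPUCB

theorem gp_ucb_regret_matern_d_gt_nu_general
{X : Type*} (k : X → X → ℝ)
    (hsym : ∀ x y : X, k x y = k y x)
    (hpsd : ∀ (n : ℕ) (xv : Fin n → X) (c : Fin n → ℝ),
      0 ≤ ∑ i, ∑ j, c i * c j * k (xv i) (xv j))
    (hk1 : ∀ x : X, k x x ≤ 1)
    (CMat lamBar : ℝ) (hCMat : 0 < CMat) (hlamBar : 0 < lamBar)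
    (T0 : ℕ) (d : ℕ) (ν : ℝ) (hν : 0 < ν)
    (hgain : ∀ lam : ℝ, 0 < lam → lam ≤ lamBar → ∀ t : ℕ, T0 ≤ t →
      mig k t lam ≤ ENNReal.ofReal
        (CMat * ((t : ℝ) / lam ^ 2) ^ ((d : ℝ) / (2 * ν + (d : ℝ))) *
          Real.log ((t : ℝ) / lam ^ 2) ^ (2 * ν / (2 * ν + (d : ℝ)))))
    (Ctil : ℝ) (hCtil : Ctil = max 1
      ((2 + 2 * ν / (d : ℝ)) ^ (2 * ν / (d : ℝ)) * (6 * CMat) ^ (1 + 2 * ν / (d : ℝ))))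
    (Tlam : ℕ) (hTlam : ∀ t : ℕ, Tlam ≤ t →
      Ctil * (t : ℝ) ^ (-(2 * ν / (d : ℝ))) * Real.log (t : ℝ) ^ (2 * ν / (d : ℝ)) ≤ lamBar ^ 2)
    (TMat : ℕ) (hTMat : TMat = max 4 (max T0 Tlam))
    (hdν : ν < (d : ℝ))
(f : X → ℝ) (n : ℕ) (c : Fin n → ℝ) (xv : Fin n → X)
    (hf : ∀ x : X, f x = ∑ i, c i * k (xv i) x)
    (B : ℝ) (hB : 0 < B)
    (hnorm : Real.sqrt (∑ i, ∑ j, c i * c j * k (xv i) (xv j)) ≤ B)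
    (xstar : X)
    (xseq : ℕ → X)
    (hinv : ∀ t : ℕ, 1 ≤ t → IsUnit (gram k (prefN xseq t)).det)
    (hucb : ∀ (t : ℕ) (x : X),
      postMean k (prefN xseq t) f x + B * postStdInv k (prefN xseq t) x ≤
        postMean k (prefN xseq t) f (xseq t) + B * postStdInv k (prefN xseq t) (xseq t)) :
    ∀ T : ℕ, 0 < T →
      ∑ t : Fin T, (f xstar - f (xseq t.1)) ≤
        2 * B * ((TMat : ℝ) + Real.sqrt Ctil * ((d : ℝ) / ((d : ℝ) - ν)) *
          (T : ℝ) ^ (((d : ℝ) - ν) / (d : ℝ)) * Real.log (T : ℝ) ^ (ν / (d : ℝ))) := by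
  intro T _
  have hk := posSemidef_of_forall_fin_sum_nonneg hsym hpsd
  have hfB : c ⬝ᵥ (gram k xv *ᵥ c) ≤ B ^ 2 := by
    rw [dotProduct_gram_mulVec]
    exact (Real.sqrt_le_left hB.le).mp hnorm
  have hinv' : ∀ t, IsUnit (gram k (prefN xseq t)).det
    | 0 => by simp
    | t + 1 => hinv (t + 1) t.succ_pos
  have hCtil1 : 1 ≤ Ctil := hCtil ▸ le_max_left _ _
  have hCtilZ : (2 + 2 * ν / d) ^ (2 * ν / d) * (6 * CMat) ^ (1 + 2 * ν / d) ≤ Ctil :=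
    hCtil ▸ le_max_right _ _
  calc ∑ t : Fin T, (f xstar - f (xseq t.1)) = ∑ t ∈ range T, (f xstar - f (xseq t)) :=
        Fin.sum_univ_eq_sum_range (fun t => f xstar - f (xseq t)) T
    _ ≤ ∑ t ∈ range T, 2 * B * min 1 (postStdInv k (prefN xseq t) (xseq t)) :=
        sum_le_sum fun t _ => sub_le_two_mul_min_postStdInv hk hk1 hf hB.le hfB (hinv' t)
          (hucb t xstar)
    _ = 2 * B * ∑ t ∈ range T, min 1 (postStdInv k (prefN xseq t) (xseq t)) := by
        rw [mul_sum]
    _ ≤ _ := by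
        gcongr
        exact sum_min_one_postStdInv_le hk hinv' hgain hν hdν hCMat hlamBar.le hCtil1 hCtilZ
          (by omega) (by omega) (fun t ht => hTlam t (by omega)) T

/-- Cumulative regret for GP-UCB under a Matérn-type information-gain bound,
case d > ν. -/
theorem gp_ucb_regret_matern_d_gt_nu
{X : Type*} [Nonempty X] (k : X → X → ℝ)
    (hsym : ∀ x y : X, k x y = k y x)
    (hpsd : ∀ (n : ℕ) (xv : Fin n → X) (c : Fin n → ℝ),
      0 ≤ ∑ i, ∑ j, c i * c j * k (xv i) (xv j))
    (hk1 : ∀ x : X, k x x ≤ 1)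
    (CMat lamBar : ℝ) (hCMat : 0 < CMat) (hlamBar : 0 < lamBar)
    (T0 : ℕ) (hT0 : 2 ≤ T0) (d : ℕ) (hd : 1 ≤ d) (ν : ℝ) (hν : 0 < ν)
    (hgain : ∀ lam : ℝ, 0 < lam → lam ≤ lamBar → ∀ t : ℕ, T0 ≤ t →
      mig k t lam ≤ ENNReal.ofReal
        (CMat * ((t : ℝ) / lam ^ 2) ^ ((d : ℝ) / (2 * ν + (d : ℝ))) *
          Real.log ((t : ℝ) / lam ^ 2) ^ (2 * ν / (2 * ν + (d : ℝ)))))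
    (Ctil : ℝ) (hCtil : Ctil = max 1
      ((2 + 2 * ν / (d : ℝ)) ^ (2 * ν / (d : ℝ)) * (6 * CMat) ^ (1 + 2 * ν / (d : ℝ))))
    (Tlam : ℕ) (hTlam : ∀ t : ℕ, Tlam ≤ t →
      Ctil * (t : ℝ) ^ (-(2 * ν / (d : ℝ))) * Real.log (t : ℝ) ^ (2 * ν / (d : ℝ)) ≤ lamBar ^ 2)
    (TMat : ℕ) (hTMat : TMat = max 4 (max T0 Tlam))
    (hdν : ν < (d : ℝ))
(f : X → ℝ) (n : ℕ) (c : Fin n → ℝ) (xv : Fin n → X)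
    (hf : ∀ x : X, f x = ∑ i, c i * k (xv i) x)
    (B : ℝ) (hB : 0 < B)
    (hnorm : Real.sqrt (∑ i, ∑ j, c i * c j * k (xv i) (xv j)) ≤ B)
    (xstar : X) (hstar : ∀ x : X, f x ≤ f xstar)
    (xseq : ℕ → X)
    (hinv : ∀ t : ℕ, 1 ≤ t → IsUnit (gram k (prefN xseq t)).det)
    (hucb : ∀ (t : ℕ) (x : X),
      postMean k (prefN xseq t) f x + B * postStdInv k (prefN xseq t) x ≤
        postMean k (prefN xseq t) f (xseq t) + B * postStdInv k (prefN xseq t) (xseq t)) :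
    ∀ T : ℕ, 0 < T →
      ∑ t : Fin T, (f xstar - f (xseq t.1)) ≤
        2 * B * ((TMat : ℝ) + Real.sqrt Ctil * ((d : ℝ) / ((d : ℝ) - ν)) *
          (T : ℝ) ^ (((d : ℝ) - ν) / (d : ℝ)) * Real.log (T : ℝ) ^ (ν / (d : ℝ))) :=
  gp_ucb_regret_matern_d_gt_nu_general k hsym hpsd hk1 CMat lamBar hCMat hlamBar T0 d ν hν hgain
    Ctil hCtil Tlam hTlam TMat hTMat hdν f n c xv hf B hB hnorm xstar xseq hinv hucb
end
end
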